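/- arXiv:2002.09873 — 9 statements merged into one kernel-verified Lean document; each statement's English description precedes it below -/
import Mathlib

section
/- The spectrum Ŝ of proper round prime filters of a ∨-semilattice S with minimum 0 and relation ≺ is always a sober topological space: every irreducible closed subset of Ŝ has a unique dense point. -/
variable {S : Type*} [SemilatticeSup S] [OrderBot S]

/-- A (nonempty) filter: an up-set in which any two elements have a common lower bound. -/
def IsFilt (F : Set S) : Prop :=
  F.Nonempty ∧ (∀ p ∈ F, ∀ q, p ≤ q → q ∈ F) ∧
    ∀ p ∈ F, ∀ q ∈ F, ∃ t ∈ F, t ≤ p ∧ t ≤ q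

/-- A filter is round if every member has a `r`-predecessor in the filter. -/
def IsRound (r : S → S → Prop) (F : Set S) : Prop :=
  ∀ p ∈ F, ∃ t ∈ F, r t p

/-- Primeness: `p ⊔ q ∈ P` implies `p ∈ P` or `q ∈ P`. -/
def IsPrimeFilt (P : Set S) : Prop :=
  ∀ p q, p ⊔ q ∈ P → p ∈ P ∨ q ∈ P

/-- The spectrum: proper round prime filters. -/
def Spec (r : S → S → Prop) : Type _ :=
  {P : Set S // IsFilt P ∧ IsRound r P ∧ IsPrimeFilt P ∧ ⊥ ∉ P}

/-- The basic open set `Ŝ_p`. -/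
def basicOpen (r : S → S → Prop) (p : S) : Set (Spec r) :=
  {P | p ∈ P.1}

instance specTop (r : S → S → Prop) : TopologicalSpace (Spec r) :=
  TopologicalSpace.generateFrom (Set.range (basicOpen r))

/-- Distributivity of `r`. -/
def IsDistrib (r : S → S → Prop) : Prop :=
  ∀ p s t, r p (s ⊔ t) → ∀ p', r p' p →
    ∃ s' t', r s' s ∧ r t' t ∧ p' ≤ s' ⊔ t' ∧ s' ⊔ t' ≤ p

/-- `r` is auxiliary. -/
def IsAux (r : S → S → Prop) : Prop :=
  (∀ p p' q' q, p ≤ p' → r p' q' → q' ≤ q → r p q) ∧ ∀ p q, r p q → p ≤ q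

/-- `r` is interpolative. -/
def IsInterp (r : S → S → Prop) : Prop :=
  ∀ p q, r p q → ∃ s, r p s ∧ r s q

/-- `r` is approximating: `≤` is the lower preorder of `r`. -/
def IsApprox (r : S → S → Prop) : Prop :=
  ∀ p q, p ≤ q ↔ ∀ t, r t p → r t q

/-- `r` is `∨`-preserving. -/
def IsSupPres (r : S → S → Prop) : Prop :=
  ∀ p p' q q', r p' p → r q' q → r (p' ⊔ q') (p ⊔ q)

/-- `S` with `r` is a `∨`-predomain. -/
def IsPredom (r : S → S → Prop) : Prop :=
  IsAux r ∧ IsApprox r ∧ IsInterp r ∧ IsSupPres r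

/-- Ideal: downward closed and closed under pairwise joins. -/
def IsIdl (I : Set S) : Prop :=
  (∀ p ∈ I, ∀ q, q ≤ p → q ∈ I) ∧ ∀ p ∈ I, ∀ q ∈ I, p ⊔ q ∈ I

section Aux
variable {S : Type*} [SemilatticeSup S] [OrderBot S]

theorem basicOpen_mono (r : S → S → Prop) {s t : S} (h : s ≤ t) :
    basicOpen r s ⊆ basicOpen r t := fun P hP => P.2.1.2.1 s hP t h

theorem exists_basic_subset (r : S → S → Prop) {U : Set (Spec r)}
    (hU : IsOpen U) {Q : Spec r} (hQ : Q ∈ U) :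
    ∃ t ∈ Q.1, basicOpen r t ⊆ U := by
  induction hU with
  | basic V hV =>
      obtain ⟨p, rfl⟩ := hV
      exact ⟨p, hQ, subset_rfl⟩
  | univ =>
      obtain ⟨p, hp⟩ := Q.2.1.1
      exact ⟨p, hp, Set.subset_univ _⟩
  | inter V W hV hW ihV ihW =>
      obtain ⟨s, hs, hsV⟩ := ihV hQ.1
      obtain ⟨t, ht, htW⟩ := ihW hQ.2
      obtain ⟨u, hu, hus, hut⟩ := Q.2.1.2.2 s hs t ht
      exact ⟨u, hu, Set.subset_inter
        ((basicOpen_mono r hus).trans hsV) ((basicOpen_mono r hut).trans htW)⟩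
  | sUnion 𝒮 hS ih =>
      obtain ⟨V, hV, hQV⟩ := hQ
      obtain ⟨t, ht, htV⟩ := ih V hV hQV
      exact ⟨t, ht, htV.trans (Set.subset_sUnion_of_mem hV)⟩

theorem isOpen_basicOpen (r : S → S → Prop) (p : S) : IsOpen (basicOpen r p) :=
  TopologicalSpace.GenerateOpen.basic _ ⟨p, rfl⟩

end Aux

theorem stmt3' (r : S → S → Prop) : QuasiSober (Spec (S := S) r) ∧ T0Space (Spec r) := by
  constructor
  · constructor
    intro C hC hCcl
    classical
    set P : Set S := {p | ∃ Q ∈ C, p ∈ (Q : Spec r).1} with hPdef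
    have hmem : ∀ p, p ∈ P ↔ (C ∩ basicOpen r p).Nonempty := by
      intro p
      constructor
      · rintro ⟨Q, hQ, hpQ⟩; exact ⟨Q, hQ, hpQ⟩
      · rintro ⟨Q, hQ, hpQ⟩; exact ⟨Q, hQ, hpQ⟩
    have hfilt : IsFilt P := by
      refine ⟨?_, ?_, ?_⟩
      · obtain ⟨Q, hQ⟩ := hC.1
        obtain ⟨p, hp⟩ := Q.2.1.1
        exact ⟨p, Q, hQ, hp⟩
      · rintro p ⟨Q, hQ, hpQ⟩ q hpq
        exact ⟨Q, hQ, Q.2.1.2.1 p hpQ q hpq⟩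
      · rintro p hp q hq
        have h := hC.2 _ _ (isOpen_basicOpen r p) (isOpen_basicOpen r q)
          ((hmem p).1 hp) ((hmem q).1 hq)
        obtain ⟨Q, hQC, hpQ, hqQ⟩ := h
        obtain ⟨t, ht, htp, htq⟩ := Q.2.1.2.2 p hpQ q hqQ
        exact ⟨t, ⟨Q, hQC, ht⟩, htp, htq⟩
    have hround : IsRound r P := by
      rintro p ⟨Q, hQ, hpQ⟩
      obtain ⟨t, ht, htr⟩ := Q.2.2.1 p hpQ
      exact ⟨t, ⟨Q, hQ, ht⟩, htr⟩
    have hprime : IsPrimeFilt P := by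
      rintro p q ⟨Q, hQ, hpq⟩
      rcases Q.2.2.2.1 p q hpq with h | h
      · exact Or.inl ⟨Q, hQ, h⟩
      · exact Or.inr ⟨Q, hQ, h⟩
    have hbot : ⊥ ∉ P := by
      rintro ⟨Q, hQ, hb⟩
      exact Q.2.2.2.2 hb
    refine ⟨⟨P, hfilt, hround, hprime, hbot⟩, ?_⟩
    set Pt : Spec r := ⟨P, hfilt, hround, hprime, hbot⟩
    have hPtC : Pt ∈ C := by
      by_contra h
      obtain ⟨t, ht, htsub⟩ := exists_basic_subset r hCcl.isOpen_compl h
      obtain ⟨Q, hQC, htQ⟩ := ht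
      exact htsub htQ hQC
    apply le_antisymm
    · exact closure_minimal (Set.singleton_subset_iff.2 hPtC) hCcl
    · intro Q hQ
      rw [mem_closure_iff]
      intro U hU hQU
      obtain ⟨t, ht, htsub⟩ := exists_basic_subset r hU hQU
      exact ⟨Pt, htsub ⟨Q, hQ, ht⟩, rfl⟩
  · refine t0Space_iff_inseparable _ |>.2 fun P Q h => ?_
    apply Subtype.ext
    ext p
    exact h.mem_open_iff (isOpen_basicOpen r p)

theorem stmt3 (r : S → S → Prop) : QuasiSober (Spec r) ∧ T0Space (Spec r) := stmt3' r
end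

section
/- Let X be a core compact sober space and S a ∪-basis of X (a basis of the topology closed under finite unions, including the empty union ∅). Then the map x ↦ S_x = {s ∈ S : x ∈ s} is a homeomorphism from X onto the spectrum Ŝ, where S is equipped with ⊆ as the order and the way-below relation ⋐ as ≺. -/
variable {S : Type*} [SemilatticeSup S] [OrderBot S]

/-- The way-below relation on subsets of a topological space:
every open cover of `q` has a finite subcover of `p`. -/
def WayBelow {X : Type*} [TopologicalSpace X] (p q : Set X) : Prop :=
  ∀ C : Set (Set X), (∀ U ∈ C, IsOpen U) → q ⊆ ⋃₀ C →
    ∃ F ⊆ C, F.Finite ∧ p ⊆ ⋃₀ F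

/-- Core compactness. -/
def CoreCompact (X : Type*) [TopologicalSpace X] : Prop :=
  ∀ (x : X) (U : Set X), IsOpen U → x ∈ U → ∃ V, IsOpen V ∧ x ∈ V ∧ WayBelow V U

/-- A `∪`-basis: a basis containing `∅` and closed under pairwise unions. -/
def IsUnionBasis {X : Type*} [TopologicalSpace X] (B : Set (Set X)) : Prop :=
  TopologicalSpace.IsTopologicalBasis B ∧ ∅ ∈ B ∧ ∀ p ∈ B, ∀ q ∈ B, p ∪ q ∈ B

/-- A filter on a `∪`-basis `B`. -/
def BFilt {X : Type*} [TopologicalSpace X] (B : Set (Set X)) (P : Set (Set X)) : Prop :=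
  P.Nonempty ∧ P ⊆ B ∧ (∀ p ∈ P, ∀ q ∈ B, p ⊆ q → q ∈ P) ∧
    ∀ p ∈ P, ∀ q ∈ P, ∃ t ∈ P, t ⊆ p ∧ t ⊆ q

/-- The spectrum of a `∪`-basis `B` with `⊆` as order and way-below `⋐` as `≺`:
proper round prime filters on `B`. -/
def BSpec {X : Type*} [TopologicalSpace X] (B : Set (Set X)) : Type _ :=
  {P : Set (Set X) // BFilt B P ∧ (∀ p ∈ P, ∃ t ∈ P, WayBelow t p) ∧
    (∀ p ∈ B, ∀ q ∈ B, p ∪ q ∈ P → p ∈ P ∨ q ∈ P) ∧ ∅ ∉ P}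

def bBasic {X : Type*} [TopologicalSpace X] (B : Set (Set X)) (p : Set X) :
    Set (BSpec B) := {P | p ∈ P.1}

instance bSpecTop {X : Type*} [TopologicalSpace X] (B : Set (Set X)) :
    TopologicalSpace (BSpec B) :=
  TopologicalSpace.generateFrom (Set.range (bBasic B))

/-!
A proper round prime filter `P` determines the closed set `P.locus` of points lying in no basic
open outside `P`. Every member `p` of `P` meets `P.locus`: otherwise a member `t ⋐ p` of `P` would
be covered by finitely many basic opens outside `P`, whose union lies in `P`, contradicting
primeness. Hence `P.locus` is irreducible, and `P` is the filter of basic neighbourhoods of its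
generic point. Since the basic open `Ŝ_s` pulls back to `s`, the resulting bijection is a
homeomorphism.
-/

open TopologicalSpace

section

variable {X : Type*} [TopologicalSpace X] {B : Set (Set X)}

lemma WayBelow.mono_left {p p' q : Set X} (h : p ⊆ p') (hw : WayBelow p' q) : WayBelow p q :=
  fun C hC hcov => (hw C hC hcov).imp fun _ ⟨hF, hfin, hsub⟩ => ⟨hF, hfin, h.trans hsub⟩

lemma IsUnionBasis.sUnion_mem (hB : IsUnionBasis B) {F : Set (Set X)} (hF : F.Finite)
    (hFB : F ⊆ B) : ⋃₀ F ∈ B := by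
  induction F, hF using Set.Finite.induction_on with
  | empty => simpa using hB.2.1
  | @insert a F _ _ ih =>
    rw [Set.sUnion_insert]
    exact hB.2.2 a (hFB (Set.mem_insert _ _)) _ (ih ((Set.subset_insert _ _).trans hFB))

namespace BSpec

section ofPoint

variable (hB : IsTopologicalBasis B)
include hB

lemma bFilt_setOf_mem (x : X) : BFilt B {s | s ∈ B ∧ x ∈ s} := by
  refine ⟨?_, fun s hs => hs.1, fun p hp q hq hpq => ⟨hq, hpq hp.2⟩, ?_⟩
  · obtain ⟨s, hs, hxs, -⟩ := hB.exists_subset_of_mem_open (Set.mem_univ x) isOpen_univ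
    exact ⟨s, hs, hxs⟩
  · rintro p ⟨hp, hxp⟩ q ⟨hq, hxq⟩
    obtain ⟨t, ht, hxt, htpq⟩ := hB.exists_subset_of_mem_open (⟨hxp, hxq⟩ : x ∈ p ∩ q)
      ((hB.isOpen hp).inter (hB.isOpen hq))
    exact ⟨t, ⟨ht, hxt⟩, htpq.trans Set.inter_subset_left, htpq.trans Set.inter_subset_right⟩

lemma exists_wayBelow_setOf_mem (hcc : CoreCompact X) (x : X) :
    ∀ p ∈ {s | s ∈ B ∧ x ∈ s}, ∃ t ∈ {s | s ∈ B ∧ x ∈ s}, WayBelow t p := by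
  rintro p ⟨hp, hxp⟩
  obtain ⟨V, hV, hxV, hVp⟩ := hcc x p (hB.isOpen hp) hxp
  obtain ⟨t, ht, hxt, htV⟩ := hB.exists_subset_of_mem_open hxV hV
  exact ⟨t, ⟨ht, hxt⟩, hVp.mono_left htV⟩

def ofPoint (hcc : CoreCompact X) (x : X) : BSpec B :=
  ⟨{s | s ∈ B ∧ x ∈ s}, bFilt_setOf_mem hB x, exists_wayBelow_setOf_mem hB hcc x,
    fun _ hp _ hq ⟨_, hx⟩ => hx.imp (⟨hp, ·⟩) (⟨hq, ·⟩), fun h => h.2⟩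

variable (hcc : CoreCompact X)

lemma ofPoint_injective [T0Space X] : Function.Injective (ofPoint hB hcc) := by
  intro x y hxy
  refine (hB.inseparable_iff.2 fun s hs => ?_).eq
  have h := Set.ext_iff.1 (congrArg Subtype.val hxy) s
  exact and_congr_right_iff.1 h hs

lemma preimage_bBasic_ofPoint {s : Set X} (hs : s ∈ B) : ofPoint hB hcc ⁻¹' bBasic B s = s :=
  Set.ext fun _ => and_iff_right hs

lemma continuous_ofPoint : Continuous (ofPoint hB hcc) := by
  refine continuous_generateFrom_iff.2 ?_
  rintro _ ⟨s, rfl⟩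
  by_cases hs : s ∈ B
  · rw [preimage_bBasic_ofPoint hB hcc hs]
    exact hB.isOpen hs
  · convert isOpen_empty
    exact Set.eq_empty_of_forall_notMem fun _ h => hs h.1

end ofPoint

variable (P : BSpec B)

def locus : Set X := (⋃₀ (B \ P.1))ᶜ

lemma isClosed_locus (hB : IsTopologicalBasis B) : IsClosed P.locus :=
  (isOpen_sUnion fun _ hs => hB.isOpen hs.1).isClosed_compl

lemma mem_of_mem_locus {s : Set X} (hs : s ∈ B) {x : X} (hxs : x ∈ s) (hx : x ∈ P.locus) :
    s ∈ P.1 := by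
  by_contra hsP
  exact hx (Set.subset_sUnion_of_mem (show s ∈ B \ P.1 from ⟨hs, hsP⟩) hxs)

lemma exists_mem_of_sUnion_mem (hB : IsUnionBasis B) {F : Set (Set X)} (hF : F.Finite)
    (hFB : F ⊆ B) (hFP : ⋃₀ F ∈ P.1) : ∃ s ∈ F, s ∈ P.1 := by
  induction F, hF using Set.Finite.induction_on with
  | empty => exact absurd (by simpa using hFP) P.2.2.2.2
  | @insert a F _ hF ih =>
    have hFB' : F ⊆ B := (Set.subset_insert _ _).trans hFB
    rw [Set.sUnion_insert] at hFP
    rcases P.2.2.2.1 a (hFB (Set.mem_insert _ _)) _ (hB.sUnion_mem hF hFB') hFP with ha | hrest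
    · exact ⟨a, Set.mem_insert _ _, ha⟩
    · obtain ⟨s, hs, hsP⟩ := ih hFB' hrest
      exact ⟨s, Set.mem_insert_of_mem _ hs, hsP⟩

lemma locus_inter_nonempty (hB : IsUnionBasis B) {p : Set X} (hp : p ∈ P.1) :
    (P.locus ∩ p).Nonempty := by
  by_contra hempty
  have hcover : p ⊆ ⋃₀ (B \ P.1) := fun x hxp => by
    by_contra hx
    exact hempty ⟨x, hx, hxp⟩
  obtain ⟨t, htP, htp⟩ := P.2.2.1 p hp
  obtain ⟨F, hFsub, hF, htF⟩ := htp (B \ P.1) (fun _ hU => hB.1.isOpen hU.1) hcover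
  have hFB : F ⊆ B := fun s hs => (hFsub hs).1
  obtain ⟨s, hs, hsP⟩ := P.exists_mem_of_sUnion_mem hB hF hFB
    (P.2.1.2.2.1 t htP _ (hB.sUnion_mem hF hFB) htF)
  exact (hFsub hs).2 hsP

lemma isIrreducible_locus (hB : IsUnionBasis B) : IsIrreducible P.locus := by
  refine ⟨?_, fun u v hu hv ⟨x, hx, hxu⟩ ⟨y, hy, hyv⟩ => ?_⟩
  · obtain ⟨p, hp⟩ := P.2.1.1
    exact (P.locus_inter_nonempty hB hp).mono Set.inter_subset_left
  obtain ⟨s, hs, hxs, hsu⟩ := hB.1.exists_subset_of_mem_open hxu hu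
  obtain ⟨t, ht, hyt, htv⟩ := hB.1.exists_subset_of_mem_open hyv hv
  obtain ⟨w, hwP, hws, hwt⟩ :=
    P.2.1.2.2.2 s (P.mem_of_mem_locus hs hxs hx) t (P.mem_of_mem_locus ht hyt hy)
  obtain ⟨z, hz, hzw⟩ := P.locus_inter_nonempty hB hwP
  exact ⟨z, hz, hsu (hws hzw), htv (hwt hzw)⟩

lemma eq_ofPoint_of_isGenericPoint (hB : IsUnionBasis B) (hcc : CoreCompact X) {x : X}
    (hx : IsGenericPoint x P.locus) : P = ofPoint hB.1 hcc x := by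
  refine Subtype.ext (Set.ext fun s => ⟨fun hs => ?_, fun ⟨hs, hxs⟩ => ?_⟩)
  · have hsB : s ∈ B := P.2.1.2.1 hs
    exact ⟨hsB, (hx.mem_open_set_iff (hB.1.isOpen hsB)).2 (P.locus_inter_nonempty hB hs)⟩
  · exact P.mem_of_mem_locus hs hxs hx.mem

lemma ofPoint_surjective [QuasiSober X] (hB : IsUnionBasis B) (hcc : CoreCompact X) :
    Function.Surjective (ofPoint hB.1 hcc) := fun P =>
  ⟨_, (P.eq_ofPoint_of_isGenericPoint hB hcc
    ((P.isIrreducible_locus hB).isGenericPoint_genericPoint (P.isClosed_locus hB.1))).symm⟩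

end BSpec

end

theorem stmt4 {X : Type*} [TopologicalSpace X] [QuasiSober X] [T0Space X]
    (hcc : CoreCompact X) (B : Set (Set X)) (hB : IsUnionBasis B) :
    ∃ f : X ≃ₜ BSpec B, ∀ x, (f x).1 = {s | s ∈ B ∧ x ∈ s} := by
  set f := BSpec.ofPoint hB.1 hcc
  have hf : Function.Bijective f :=
    ⟨BSpec.ofPoint_injective hB.1 hcc, BSpec.ofPoint_surjective hB hcc⟩
  have hopen : IsOpenMap f := by
    refine hB.1.isOpenMap_iff.2 fun s hs => ?_
    rw [← BSpec.preimage_bBasic_ofPoint hB.1 hcc hs, Set.image_preimage_eq _ hf.2]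
    exact isOpen_generateFrom_of_mem ⟨s, rfl⟩
  exact ⟨(Equiv.ofBijective f hf).toHomeomorphOfContinuousOpen
    (BSpec.continuous_ofPoint hB.1 hcc) hopen, fun _ => rfl⟩
end

section
/- (Prime filter theorem for ≺) Let S be a ∨-semilattice with minimum 0 and a relation ≺ that is distributive and auxiliary. If I ⊆ S is an ideal and F ⊆ S is a round filter with I ∩ F = ∅, then F extends to a round prime filter P ⊇ F with I ∩ P = ∅. -/
variable {S : Type*} [SemilatticeSup S] [OrderBot S]

/-! If `⊥ ∈ F` then `F` is everything and already prime. Otherwise take an ideal `J ⊇ I ∪ {⊥}`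
maximal among those disjoint from `F`; its complement is a prime up-set containing `F`. By
maximality every `p ∉ J` satisfies `f ≤ j ⊔ p` for some `f ∈ F`, `j ∈ J`. Descending twice in the
round filter `F` and applying distributivity of `≺` turns this into some `u ≺ p` with `u ∉ J`,
which gives roundness of `Jᶜ`; doing it once more and splitting `u` along `j ⊔ q` gives common
lower bounds in `Jᶜ`. -/

section

variable {α : Type*} [SemilatticeSup α]

namespace IsIdl

variable {I J F : Set α}

theorem insert_bot [OrderBot α] (hI : IsIdl I) : IsIdl (insert ⊥ I) := by
  refine ⟨?_, ?_⟩
  · rintro p (rfl | hp) q hq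
    · exact Or.inl (le_bot_iff.mp hq)
    · exact Or.inr (hI.1 p hp q hq)
  · rintro p (rfl | hp) q (rfl | hq)
    · exact Or.inl (bot_sup_eq ⊥)
    · simpa using Or.inr hq
    · simpa using Or.inr hp
    · exact Or.inr (hI.2 p hp q hq)

theorem sUnion_of_isChain {c : Set (Set α)} (hc : ∀ K ∈ c, IsIdl K)
    (hchain : IsChain (· ⊆ ·) c) : IsIdl (⋃₀ c) := by
  refine ⟨?_, ?_⟩
  · rintro p ⟨K, hK, hpK⟩ q hq
    exact ⟨K, hK, (hc K hK).1 p hpK q hq⟩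
  · rintro p ⟨K, hK, hpK⟩ q ⟨L, hL, hqL⟩
    rcases hchain.total hK hL with hKL | hLK
    · exact ⟨L, hL, (hc L hL).2 p (hKL hpK) q hqL⟩
    · exact ⟨K, hK, (hc K hK).2 p hpK q (hLK hqL)⟩

theorem sup_principal (hJ : IsIdl J) (p : α) : IsIdl {x | ∃ j ∈ J, x ≤ j ⊔ p} := by
  refine ⟨?_, ?_⟩
  · rintro x ⟨j, hj, hx⟩ y hy
    exact ⟨j, hj, hy.trans hx⟩
  · rintro x ⟨j, hj, hx⟩ y ⟨k, hk, hy⟩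
    refine ⟨j ⊔ k, hJ.2 j hj k hk, sup_le (hx.trans ?_) (hy.trans ?_)⟩
    · exact sup_le_sup_right le_sup_left p
    · exact sup_le_sup_right le_sup_right p

theorem isPrimeFilt_compl (hJ : IsIdl J) : IsPrimeFilt Jᶜ := by
  intro p q hpq
  by_contra! h
  exact hpq (hJ.2 p (not_not.mp h.1) q (not_not.mp h.2))

theorem not_mem_of_le_sup (hJ : IsIdl J) (hJF : Disjoint J F) {f j u : α} (hf : f ∈ F)
    (hj : j ∈ J) (hle : f ≤ j ⊔ u) : u ∉ J := fun hu =>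
  Set.disjoint_left.mp hJF (hJ.1 _ (hJ.2 j hj u hu) f hle) hf

end IsIdl

theorem exists_maximal_isIdl_disjoint {I F : Set α} (hI : IsIdl I) (hIF : Disjoint I F) :
    ∃ J, I ⊆ J ∧ Maximal (fun K => IsIdl K ∧ Disjoint K F) J :=
  zorn_subset_nonempty {K | IsIdl K ∧ Disjoint K F}
    (fun c hc hchain _ => ⟨⋃₀ c,
      ⟨IsIdl.sUnion_of_isChain (fun _ hK => (hc hK).1) hchain,
        Set.disjoint_sUnion_left.mpr fun _ hK => (hc hK).2⟩,
      fun _ => Set.subset_sUnion_of_mem⟩)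
    I ⟨hI, hIF⟩

/-- Maximality of `J` means that the ideal generated by `J` and any `p ∉ J` meets `F`. -/
theorem exists_le_sup_of_maximal [OrderBot α] {J F : Set α}
    (hJ : Maximal (fun K => IsIdl K ∧ Disjoint K F) J) (hbot : ⊥ ∈ J) {p : α} (hp : p ∉ J) :
    ∃ f ∈ F, ∃ j ∈ J, f ≤ j ⊔ p := by
  by_contra! h
  have hdisj : Disjoint {x | ∃ j ∈ J, x ≤ j ⊔ p} F :=
    Set.disjoint_left.mpr fun x ⟨j, hj, hx⟩ hxF => h x hxF j hj hx
  have hle : J ⊆ {x | ∃ j ∈ J, x ≤ j ⊔ p} := fun x hx => ⟨x, hx, le_sup_left⟩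
  exact hp (hJ.2 ⟨hJ.1.1.sup_principal p, hdisj⟩ hle ⟨⊥, hbot, le_sup_right⟩)

variable {r : α → α → Prop} {J F : Set α}

theorem exists_rel_of_le_sup (hd : IsDistrib r) (ha : IsAux r) (hJ : IsIdl J)
    (hR : IsRound r F) {f j p : α} (hf : f ∈ F) (hj : j ∈ J) (hle : f ≤ j ⊔ p) :
    ∃ u, r u p ∧ r u f ∧ ∃ f' ∈ F, ∃ j' ∈ J, f' ≤ j' ⊔ u := by
  obtain ⟨f₁, hf₁, hf₁f⟩ := hR f hf
  obtain ⟨f₂, hf₂, hf₂f₁⟩ := hR f₁ hf₁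
  obtain ⟨a, u, haj, hup, hf₂le, hle'⟩ :=
    hd f₁ j p (ha.1 f₁ f₁ f _ le_rfl hf₁f hle) f₂ hf₂f₁
  exact ⟨u, hup, ha.1 u f₁ f f (le_sup_right.trans hle') hf₁f le_rfl,
    f₂, hf₂, a, hJ.1 j hj a (ha.2 a j haj), hf₂le⟩

theorem isRound_compl (hd : IsDistrib r) (ha : IsAux r) (hJ : IsIdl J) (hJF : Disjoint J F)
    (hR : IsRound r F) (hmax : ∀ p ∉ J, ∃ f ∈ F, ∃ j ∈ J, f ≤ j ⊔ p) : IsRound r Jᶜ := by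
  intro p hp
  obtain ⟨f, hf, j, hj, hle⟩ := hmax p hp
  obtain ⟨u, hup, -, f', hf', j', hj', hle'⟩ := exists_rel_of_le_sup hd ha hJ hR hf hj hle
  exact ⟨u, hJ.not_mem_of_le_sup hJF hf' hj' hle', hup⟩

theorem isFilt_compl (hd : IsDistrib r) (ha : IsAux r) (hJ : IsIdl J) (hJF : Disjoint J F)
    (hF : IsFilt F) (hR : IsRound r F) (hmax : ∀ p ∉ J, ∃ f ∈ F, ∃ j ∈ J, f ≤ j ⊔ p) :
    IsFilt Jᶜ := by
  refine ⟨hF.1.mono hJF.subset_compl_left, fun p hp q hpq hq => hp (hJ.1 q hq p hpq), ?_⟩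
  intro p hp q hq
  obtain ⟨f, hf, j, hj, hfp⟩ := hmax p hp
  obtain ⟨g, hg, k, hk, hgq⟩ := hmax q hq
  obtain ⟨h, hh, hhf, hhg⟩ := hF.2.2 f hf g hg
  have hjk := hJ.2 j hj k hk
  have hhp : h ≤ (j ⊔ k) ⊔ p := hhf.trans (hfp.trans (sup_le_sup_right le_sup_left p))
  have hhq : h ≤ (j ⊔ k) ⊔ q := hhg.trans (hgq.trans (sup_le_sup_right le_sup_right q))
  -- `u ≺ p` with `u ≺ h ≤ (j ⊔ k) ⊔ q`, then `v ≺ u` with `v ∉ J`; splitting `u`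
  -- along `(j ⊔ k) ⊔ q` at `v` yields the lower bound.
  obtain ⟨u, hup, huh, f', hf', j', hj', hle'⟩ := exists_rel_of_le_sup hd ha hJ hR hh hjk hhp
  obtain ⟨v, hvu, -, f'', hf'', j'', hj'', hle''⟩ :=
    exists_rel_of_le_sup hd ha hJ hR hf' hj' hle'
  have hvJ : v ∉ J := hJ.not_mem_of_le_sup hJF hf'' hj'' hle''
  obtain ⟨s, t, hs, htq, hv, hst⟩ :=
    hd u (j ⊔ k) q (ha.1 u u h _ le_rfl huh hhq) v hvu
  have hsJ : s ∈ J := hJ.1 _ hjk s (ha.2 s _ hs)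
  exact ⟨t, fun htJ => hvJ (hJ.1 _ (hJ.2 s hsJ t htJ) v hv),
    le_sup_right.trans (hst.trans (ha.2 u p hup)), ha.2 t q htq⟩

theorem isPrimeFilt_of_bot_mem [OrderBot α] {F : Set α} (hF : IsFilt F) (hbot : ⊥ ∈ F) :
    IsPrimeFilt F :=
  fun p _ _ => Or.inl (hF.2.1 ⊥ hbot p bot_le)

end

theorem stmt8 (r : S → S → Prop) (hd : IsDistrib r) (ha : IsAux r)
    (I F : Set S) (hI : IsIdl I) (hF : IsFilt F) (hR : IsRound r F)
    (hdis : I ∩ F = ∅) :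
    ∃ P, F ⊆ P ∧ IsFilt P ∧ IsRound r P ∧ IsPrimeFilt P ∧ I ∩ P = ∅ := by
  by_cases hbot : ⊥ ∈ F
  · exact ⟨F, subset_rfl, hF, hR, isPrimeFilt_of_bot_mem hF hbot, hdis⟩
  have hIF : Disjoint (insert ⊥ I) F :=
    Set.disjoint_insert_left.mpr ⟨hbot, Set.disjoint_iff_inter_eq_empty.mpr hdis⟩
  obtain ⟨J, hIJ, hJ⟩ := exists_maximal_isIdl_disjoint hI.insert_bot hIF
  obtain ⟨hJI, hJF⟩ := hJ.1
  have hmax : ∀ p ∉ J, ∃ f ∈ F, ∃ j ∈ J, f ≤ j ⊔ p :=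
    fun _ => exists_le_sup_of_maximal hJ (hIJ (Set.mem_insert ⊥ I))
  refine ⟨Jᶜ, hJF.subset_compl_left, isFilt_compl hd ha hJI hJF hF hR hmax,
    isRound_compl hd ha hJI hJF hR hmax, hJI.isPrimeFilt_compl, ?_⟩
  exact Set.disjoint_iff_inter_eq_empty.mp <|
    Set.disjoint_compl_right_iff_subset.mpr ((Set.subset_insert ⊥ I).trans hIJ)
end

section
/- If S is a ∪-basis of a core compact space X, then the way-below relation ⋐ on S satisfies interpolation: for p, q ∈ S with p ⋐ q there exists s ∈ S with p ⋐ s ⋐ q. -/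
variable {S : Type*} [SemilatticeSup S] [OrderBot S]

/-
In a core compact space every point `x` of an open `q` sits in a chain `x ∈ U ⋐ W ⋐ V ⋐ q`
of opens. Writing `V` as a union of basic sets, `W ⋐ V` yields finitely many of them covering
`W`, whose union `s` lies in `B` and satisfies `U ⋐ s ⋐ q`. These `U` cover `q`, so `p ⋐ q`
picks finitely many of them covering `p`, and the union of the corresponding basic sets `s`
interpolates between `p` and `q`.
-/

namespace WayBelow

variable {X : Type*} [TopologicalSpace X]

theorem mono {p p' q q' : Set X} (h : WayBelow p q) (hp : p' ⊆ p) (hq : q ⊆ q') :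
    WayBelow p' q' := by
  intro C hC hcov
  obtain ⟨F, hFC, hF, hpF⟩ := h C hC (hq.trans hcov)
  exact ⟨F, hFC, hF, hp.trans hpF⟩

theorem empty_left (q : Set X) : WayBelow ∅ q :=
  fun _ _ _ => ⟨∅, Set.empty_subset _, Set.finite_empty, Set.empty_subset _⟩

theorem union_left {p p' q : Set X} (hp : WayBelow p q) (hp' : WayBelow p' q) :
    WayBelow (p ∪ p') q := by
  intro C hC hcov
  obtain ⟨F, hFC, hF, hpF⟩ := hp C hC hcov
  obtain ⟨F', hFC', hF', hpF'⟩ := hp' C hC hcov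
  refine ⟨F ∪ F', Set.union_subset hFC hFC', hF.union hF', ?_⟩
  rw [Set.sUnion_union]
  exact Set.union_subset_union hpF hpF'

end WayBelow

namespace IsUnionBasis

variable {X : Type*} [TopologicalSpace X] {B : Set (Set X)}

theorem sUnion_mem_s9 (hB : IsUnionBasis B) {G : Set (Set X)} (hG : G.Finite) (hGB : G ⊆ B) :
    ⋃₀ G ∈ B :=
  SupClosed.sSup_mem (fun _ ha _ hb => hB.2.2 _ ha _ hb) hG hB.2.1 hGB

theorem exists_mem_between_of_wayBelow (hB : IsUnionBasis B) {W V : Set X} (hV : IsOpen V)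
    (hWV : WayBelow W V) : ∃ s ∈ B, W ⊆ s ∧ s ⊆ V := by
  obtain ⟨T, hTB, rfl⟩ := hB.1.open_eq_sUnion hV
  obtain ⟨G, hGT, hG, hWG⟩ := hWV T (fun _ hu => hB.1.isOpen (hTB hu)) subset_rfl
  exact ⟨⋃₀ G, hB.sUnion_mem_s9 hG (hGT.trans hTB), hWG, Set.sUnion_mono hGT⟩

theorem exists_open_wayBelow_mem_wayBelow (hB : IsUnionBasis B) (hcc : CoreCompact X)
    {q : Set X} (hq : IsOpen q) {x : X} (hx : x ∈ q) :
    ∃ U, IsOpen U ∧ x ∈ U ∧ ∃ s ∈ B, WayBelow U s ∧ WayBelow s q := by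
  obtain ⟨V, hV, hxV, hVq⟩ := hcc x q hq hx
  obtain ⟨W, hW, hxW, hWV⟩ := hcc x V hV hxV
  obtain ⟨U, hU, hxU, hUW⟩ := hcc x W hW hxW
  obtain ⟨s, hsB, hWs, hsV⟩ := hB.exists_mem_between_of_wayBelow hV hWV
  exact ⟨U, hU, hxU, s, hsB, hUW.mono subset_rfl hWs, hVq.mono hsV subset_rfl⟩

theorem exists_mem_wayBelow_sUnion_of_finite (hB : IsUnionBasis B) {q : Set X}
    {F : Set (Set X)} (hF : F.Finite) (hFq : ∀ U ∈ F, ∃ s ∈ B, WayBelow U s ∧ WayBelow s q) :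
    ∃ s ∈ B, WayBelow (⋃₀ F) s ∧ WayBelow s q := by
  induction F, hF using Set.Finite.induction_on with
  | empty => exact ⟨∅, hB.2.1, by simpa using WayBelow.empty_left ∅, WayBelow.empty_left q⟩
  | @insert U F _ _ ih =>
    obtain ⟨s, hsB, hUs, hsq⟩ := hFq U (Set.mem_insert U F)
    obtain ⟨t, htB, hFt, htq⟩ := ih fun V hV => hFq V (Set.mem_insert_of_mem U hV)
    refine ⟨s ∪ t, hB.2.2 s hsB t htB, ?_, hsq.union_left htq⟩
    rw [Set.sUnion_insert]
    exact (hUs.mono subset_rfl Set.subset_union_left).union_left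
      (hFt.mono subset_rfl Set.subset_union_right)

end IsUnionBasis

theorem stmt9_general {X : Type*} [TopologicalSpace X] (hcc : CoreCompact X)
    (B : Set (Set X)) (hB : IsUnionBasis B) (p q : Set X)
    (hq : q ∈ B) (h : WayBelow p q) :
    ∃ s ∈ B, WayBelow p s ∧ WayBelow s q := by
  let C := {U : Set X | IsOpen U ∧ ∃ s ∈ B, WayBelow U s ∧ WayBelow s q}
  have hqC : q ⊆ ⋃₀ C := fun x hx =>
    let ⟨U, hU, hxU, hUq⟩ := hB.exists_open_wayBelow_mem_wayBelow hcc (hB.1.isOpen hq) hx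
    ⟨U, ⟨hU, hUq⟩, hxU⟩
  obtain ⟨F, hFC, hF, hpF⟩ := h C (fun _ hU => hU.1) hqC
  obtain ⟨s, hsB, hFs, hsq⟩ :=
    hB.exists_mem_wayBelow_sUnion_of_finite hF fun U hU => (hFC hU).2
  exact ⟨s, hsB, hFs.mono hpF subset_rfl, hsq⟩

theorem stmt9 {X : Type*} [TopologicalSpace X] (hcc : CoreCompact X)
    (B : Set (Set X)) (hB : IsUnionBasis B) (p q : Set X)
    (hp : p ∈ B) (hq : q ∈ B) (h : WayBelow p q) :
    ∃ s ∈ B, WayBelow p s ∧ WayBelow s q :=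
  stmt9_general hcc B hB p q hq h
end

section
/- Let S be a ∨-semilattice with minimum 0 and a relation ≺ that is distributive, auxiliary and interpolative. Then for all p, q ∈ S with p ≺ q there exists a compact subset C of the spectrum Ŝ with Ŝ_p ⊆ C ⊆ Ŝ_q. -/
variable {S : Type*} [SemilatticeSup S] [OrderBot S]

theorem stmt10 (r : S → S → Prop) (hd : IsDistrib r) (ha : IsAux r)
    (hi : IsInterp r) (p q : S) (h : r p q) :
    ∃ C : Set (Spec r), IsCompact C ∧ basicOpen r p ⊆ C ∧ C ⊆ basicOpen r q := by
  obtain ⟨hmono, hle⟩ := ha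
  -- an interpolating sequence q = s 0, with r p (s n) and r (s (n+1)) (s n)
  obtain ⟨s, hs0, hps, hstep⟩ :
      ∃ s : ℕ → S, s 0 = q ∧ (∀ n, r p (s n)) ∧ ∀ n, r (s (n + 1)) (s n) := by
    choose f h1 h2 using fun x : {x : S // r p x} => hi p x.1 x.2
    let g : {x : S // r p x} → {x : S // r p x} := fun x => ⟨f x, h1 x⟩
    refine ⟨fun n => (g^[n] ⟨q, h⟩).1, rfl, fun n => (g^[n] ⟨q, h⟩).2, fun n => ?_⟩
    show r (g^[n + 1] ⟨q, h⟩).1 (g^[n] ⟨q, h⟩).1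
    rw [Function.iterate_succ_apply']
    exact h2 _
  have hsle : ∀ n, s (n + 1) ≤ s n := fun n => hle _ _ (hstep n)
  have hsmono : ∀ n m, n ≤ m → s m ≤ s n := by
    have key : ∀ k n, s (n + k) ≤ s n := by
      intro k
      induction k with
      | zero => exact fun n => le_rfl
      | succ k ih => exact fun n => le_trans (by rw [← Nat.add_assoc]; exact hsle (n + k)) (ih n)
    intro n m hnm
    obtain ⟨k, rfl⟩ := Nat.exists_eq_add_of_le hnm
    exact key k n
  refine ⟨{Q : Spec r | ∀ n, s n ∈ Q.1}, ?_, ?_, ?_⟩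
  · -- compactness
    rw [isCompact_iff_ultrafilter_le_nhds]
    intro U hU
    have hCU : {Q : Spec r | ∀ n, s n ∈ Q.1} ∈ U := by
      exact Filter.le_principal_iff.mp hU
    -- the ideal of elements whose basic open is not in U
    set I : Set S := {a | basicOpen r a ∉ U} with hIdef
    have hsub : ∀ a b : S, a ≤ b → basicOpen r a ⊆ basicOpen r b := by
      intro a b hab Q hQ
      exact Q.2.1.2.1 a hQ b hab
    have hIdown : ∀ a ∈ I, ∀ b, b ≤ a → b ∈ I := by
      intro a haI b hba hbU
      exact haI (Filter.mem_of_superset hbU (hsub b a hba))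
    have hIjoin : ∀ a ∈ I, ∀ b ∈ I, a ⊔ b ∈ I := by
      intro a haI b hbI hU'
      have : basicOpen r (a ⊔ b) = basicOpen r a ∪ basicOpen r b := by
        ext Q
        constructor
        · intro hQ
          exact Q.2.2.2.1 a b hQ
        · rintro (hQ | hQ)
          · exact Q.2.1.2.1 a hQ _ le_sup_left
          · exact Q.2.1.2.1 b hQ _ le_sup_right
      rw [this, Ultrafilter.union_mem_iff] at hU'
      rcases hU' with h' | h'
      · exact haI h'
      · exact hbI h'
    have hbotI : ⊥ ∈ I := by
      have : basicOpen r (⊥ : S) = ∅ := by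
        ext Q
        simp only [Set.mem_empty_iff_false, iff_false]
        exact fun hQ => Q.2.2.2.2 hQ
      show basicOpen r (⊥ : S) ∉ U
      rw [this]
      exact Ultrafilter.empty_notMem
    have hIs : ∀ n, s n ∉ I := by
      intro n hn
      exact hn (Filter.mem_of_superset hCU fun Q hQ => hQ n)
    -- Zorn: a maximal ideal J ⊇ I disjoint from the sequence
    set 𝒥 : Set (Set S) :=
      {J | (∀ a ∈ J, ∀ b, b ≤ a → b ∈ J) ∧ (∀ a ∈ J, ∀ b ∈ J, a ⊔ b ∈ J) ∧ I ⊆ J ∧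
        ∀ n, s n ∉ J} with h𝒥
    obtain ⟨J, hIJ, hJmem, hJmax⟩ :
        ∃ J, I ⊆ J ∧ J ∈ 𝒥 ∧ ∀ K ∈ 𝒥, J ⊆ K → K ⊆ J := by
      have hchain : ∀ c ⊆ 𝒥, IsChain (· ⊆ ·) c → c.Nonempty →
          ∃ ub ∈ 𝒥, ∀ t ∈ c, t ⊆ ub := by
        intro c hc hchain ⟨J0, hJ0⟩
        refine ⟨⋃₀ c, ⟨?_, ?_, ?_, ?_⟩, fun t ht => Set.subset_sUnion_of_mem ht⟩
        · rintro a ⟨J1, hJ1, haJ1⟩ b hba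
          exact ⟨J1, hJ1, (hc hJ1).1 a haJ1 b hba⟩
        · rintro a ⟨J1, hJ1, haJ1⟩ b ⟨J2, hJ2, hbJ2⟩
          rcases hchain.total hJ1 hJ2 with h12 | h21
          · exact ⟨J2, hJ2, (hc hJ2).2.1 a (h12 haJ1) b hbJ2⟩
          · exact ⟨J1, hJ1, (hc hJ1).2.1 a haJ1 b (h21 hbJ2)⟩
        · exact fun a haI => ⟨J0, hJ0, (hc hJ0).2.2.1 haI⟩
        · rintro n ⟨J1, hJ1, hsJ1⟩
          exact (hc hJ1).2.2.2 n hsJ1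
      have hI𝒥 : I ∈ 𝒥 := ⟨hIdown, hIjoin, subset_rfl, hIs⟩
      obtain ⟨J, hIJ, hJmax⟩ := zorn_subset_nonempty 𝒥 hchain I hI𝒥
      exact ⟨J, hIJ, hJmax.1, fun K hK hJK => hJmax.2 hK hJK⟩
    obtain ⟨hJdown, hJjoin, hIJ', hJs⟩ := hJmem
    -- maximality characterization
    have hchar : ∀ x, x ∉ J → ∃ n, ∃ j ∈ J, s n ≤ j ⊔ x := by
      intro x hx
      by_contra hcon
      push_neg at hcon
      have hJ'mem : {y | ∃ j ∈ J, y ≤ j ⊔ x} ∈ 𝒥 := by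
        refine ⟨?_, ?_, ?_, ?_⟩
        · rintro a ⟨j, hj, haj⟩ b hba
          exact ⟨j, hj, le_trans hba haj⟩
        · rintro a ⟨j1, hj1, ha1⟩ b ⟨j2, hj2, hb1⟩
          refine ⟨j1 ⊔ j2, hJjoin j1 hj1 j2 hj2, ?_⟩
          refine sup_le (le_trans ha1 ?_) (le_trans hb1 ?_)
          · exact sup_le (le_trans le_sup_left le_sup_left) le_sup_right
          · exact sup_le (le_trans le_sup_right le_sup_left) le_sup_right
        · intro a haI
          exact ⟨a, hIJ' haI, le_sup_left⟩
        · rintro n ⟨j, hj, hsn⟩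
          exact hcon n j hj hsn
      have hsubJ' : J ⊆ {y | ∃ j ∈ J, y ≤ j ⊔ x} := fun j hj => ⟨j, hj, le_sup_left⟩
      have : x ∈ J := hJmax _ hJ'mem hsubJ' ⟨⊥, hIJ' hbotI, le_sup_right⟩
      exact hx this
    -- roundness of the complement of J
    have halpha : ∀ x, x ∉ J → ∃ y, y ∉ J ∧ r y x := by
      intro x hx
      obtain ⟨n, j, hjJ, hle'⟩ := hchar x hx
      have h1 : r (s (n + 1)) (j ⊔ x) := hmono _ _ _ _ le_rfl (hstep n) hle'
      obtain ⟨j', x', hj', hx', hle2, _⟩ := hd _ _ _ h1 _ (hstep (n + 1))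
      refine ⟨x', fun hx'J => ?_, hx'⟩
      have hj'J : j' ∈ J := hJdown j hjJ j' (hle _ _ hj')
      exact hJs (n + 2) (hJdown _ (hJjoin _ hj'J _ hx'J) _ hle2)
    -- directedness of the complement of J
    have hdir : ∀ x, x ∉ J → ∀ y, y ∉ J → ∃ u, u ∉ J ∧ u ≤ x ∧ u ≤ y := by
      intro x hx y hy
      obtain ⟨n, j1, hj1, hn⟩ := hchar x hx
      obtain ⟨m, j2, hj2, hm⟩ := hchar y hy
      set k := max n m with hk
      have hj0 : j1 ⊔ j2 ∈ J := hJjoin _ hj1 _ hj2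
      have hkx : s k ≤ (j1 ⊔ j2) ⊔ x :=
        le_trans (hsmono n k (le_max_left n m))
          (le_trans hn (sup_le_sup_right le_sup_left x))
      have hky : s k ≤ (j1 ⊔ j2) ⊔ y :=
        le_trans (hsmono m k (le_max_right n m))
          (le_trans hm (sup_le_sup_right le_sup_right y))
      have h1 : r (s (k + 1)) ((j1 ⊔ j2) ⊔ x) := hmono _ _ _ _ le_rfl (hstep k) hkx
      obtain ⟨jA, xA, hjA, hxA, h2, h3⟩ := hd _ _ _ h1 _ (hstep (k + 1))
      have h4 : r (s (k + 3)) (jA ⊔ xA) := hmono _ _ _ _ le_rfl (hstep (k + 2)) h2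
      obtain ⟨jB, xB, hjB, hxB, h5, _⟩ := hd _ _ _ h4 _ (hstep (k + 3))
      have hjAJ : jA ∈ J := hJdown _ hj0 _ (hle _ _ hjA)
      have hjBJ : jB ∈ J := hJdown _ hjAJ _ (hle _ _ hjB)
      have hxBJ : xB ∉ J := fun hc =>
        hJs (k + 4) (hJdown _ (hJjoin _ hjBJ _ hc) _ h5)
      obtain ⟨xC, hxCJ, hxC⟩ := halpha xB hxBJ
      have hxAle : xA ≤ (j1 ⊔ j2) ⊔ y :=
        le_trans le_sup_right (le_trans h3 (le_trans (hsle k) hky))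
      have h6 : r xB ((j1 ⊔ j2) ⊔ y) := hmono _ _ _ _ le_rfl hxB hxAle
      obtain ⟨jD, u, hjD, hu, h7, h8⟩ := hd _ _ _ h6 _ hxC
      refine ⟨u, fun huJ => ?_, ?_, hle _ _ hu⟩
      · have : jD ∈ J := hJdown _ hj0 _ (hle _ _ hjD)
        exact hxCJ (hJdown _ (hJjoin _ this _ huJ) _ h7)
      · exact le_trans (le_trans le_sup_right h8) (le_trans (hle _ _ hxB) (hle _ _ hxA))
    -- the point of the spectrum
    have hfilt : IsFilt (Jᶜ : Set S) := by
      refine ⟨⟨q, fun hq => hJs 0 (by rwa [hs0])⟩, ?_, ?_⟩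
      · intro a haJ b hab hbJ
        exact haJ (hJdown b hbJ a hab)
      · intro a haJ b hbJ
        obtain ⟨u, huJ, hua, hub⟩ := hdir a haJ b hbJ
        exact ⟨u, huJ, hua, hub⟩
    have hround : IsRound r (Jᶜ : Set S) := by
      intro a haJ
      obtain ⟨y, hyJ, hya⟩ := halpha a haJ
      exact ⟨y, hyJ, hya⟩
    have hprime : IsPrimeFilt (Jᶜ : Set S) := by
      intro a b hab
      by_cases haJ : a ∈ J
      · by_cases hbJ : b ∈ J
        · exact absurd (hJjoin a haJ b hbJ) hab
        · exact Or.inr hbJ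
      · exact Or.inl haJ
    have hbot' : (⊥ : S) ∉ (Jᶜ : Set S) := fun hb => hb (hIJ' hbotI)
    refine ⟨⟨Jᶜ, hfilt, hround, hprime, hbot'⟩, fun n => hJs n, ?_⟩
    have hnh : @nhds (Spec r) (specTop r) ⟨Jᶜ, hfilt, hround, hprime, hbot'⟩ =
        ⨅ V ∈ {V : Set (Spec r) | (⟨Jᶜ, hfilt, hround, hprime, hbot'⟩ : Spec r) ∈ V ∧
          V ∈ Set.range (basicOpen r)}, Filter.principal V :=
      TopologicalSpace.nhds_generateFrom
    rw [hnh]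
    refine le_iInf₂ fun V hV => ?_
    obtain ⟨hPV, t, rfl⟩ := hV
    rw [Filter.le_principal_iff]
    have htI : t ∉ I := fun h' => hPV (hIJ' h')
    exact not_not.mp htI
  · -- basicOpen p ⊆ C
    intro Q hQ n
    exact Q.2.1.2.1 p hQ (s n) (hle _ _ (hps n))
  · -- C ⊆ basicOpen q
    intro Q hQ
    have := hQ 0
    rw [hs0] at this
    exact this
end

section
/- Let S be a ∨-semilattice with minimum 0 and a relation ≺ that is distributive, auxiliary, interpolative and approximating. Then for all p, q ∈ S: p ≤ q if and only if Ŝ_p ⊆ Ŝ_q. -/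
variable {S : Type*} [SemilatticeSup S] [OrderBot S]

omit [OrderBot S] in
/-- Key lemma: if `M` is a round filter, then `{x | a ⊔ x ∈ M}` is again a round filter. -/
lemma extend_filt {r : S → S → Prop} (hd : IsDistrib r) (ha : IsAux r)
    {M : Set S} (hM : IsFilt M) (hMr : IsRound r M) (a : S) :
    IsFilt {x | a ⊔ x ∈ M} ∧ IsRound r {x | a ⊔ x ∈ M} := by
  have hup := hM.2.1
  have hsub : ∀ m ∈ M, m ∈ {x | a ⊔ x ∈ M} := fun m hm => hup m hm (a ⊔ m) le_sup_right
  constructor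
  · refine ⟨?_, ?_, ?_⟩
    · obtain ⟨m, hm⟩ := hM.1
      exact ⟨m, hsub m hm⟩
    · intro x hx y hxy
      exact hup _ hx _ (sup_le_sup_left hxy a)
    · intro x hx y hy
      obtain ⟨t, htM, htx, hty⟩ := hM.2.2 _ hx _ hy
      obtain ⟨t₁, ht₁M, ht₁⟩ := hMr t htM
      obtain ⟨t₂, ht₂M, ht₂⟩ := hMr t₁ ht₁M
      obtain ⟨t₃, ht₃M, ht₃⟩ := hMr t₂ ht₂M
      obtain ⟨t₄, ht₄M, ht₄⟩ := hMr t₃ ht₃M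
      have h1 : r t₁ (a ⊔ x) := ha.1 t₁ t₁ t _ le_rfl ht₁ htx
      obtain ⟨a₁, x₁, ha₁, hx₁, hle1, hle1'⟩ := hd t₁ a x h1 t₂ ht₂
      have h2 : r t₃ (a₁ ⊔ x₁) := ha.1 t₃ t₃ t₂ _ le_rfl ht₃ hle1
      obtain ⟨a₁', x₁', ha₁', hx₁', hle2, hle2'⟩ := hd t₃ a₁ x₁ h2 t₄ ht₄
      have hx₁t₁ : x₁ ≤ t₁ := le_trans le_sup_right hle1'
      have h3 : r x₁ (a ⊔ y) := ha.1 x₁ t₁ t _ hx₁t₁ ht₁ hty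
      obtain ⟨a₃, y₂, ha₃, hy₂, hle3, hle3'⟩ := hd x₁ a y h3 x₁' hx₁'
      refine ⟨y₂, ?_, ?_, ha.2 _ _ hy₂⟩
      · have hkey : t₄ ≤ a ⊔ y₂ := by
          refine le_trans hle2 (sup_le ?_ ?_)
          · exact le_trans (ha.2 _ _ ha₁') (le_trans (ha.2 _ _ ha₁) le_sup_left)
          · exact le_trans hle3 (sup_le (le_trans (ha.2 _ _ ha₃) le_sup_left) le_sup_right)
        exact hup _ ht₄M _ hkey
      · exact le_trans (le_trans le_sup_right hle3') (ha.2 _ _ hx₁)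
  · intro x hx
    obtain ⟨c, hcM, hc⟩ := hMr _ hx
    obtain ⟨c', hc'M, hc'⟩ := hMr _ hcM
    obtain ⟨a', x', ha', hx', hle, _⟩ := hd c a x hc c' hc'
    refine ⟨x', hup _ hc'M _ (le_trans hle (sup_le (le_trans (ha.2 _ _ ha') le_sup_left) le_sup_right)), hx'⟩

theorem stmt13 (r : S → S → Prop) (hd : IsDistrib r) (ha : IsAux r)
    (hi : IsInterp r) (hap : IsApprox r) (p q : S) :
    p ≤ q ↔ basicOpen r p ⊆ basicOpen r q := by
  constructor
  · intro hpq P hP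
    exact P.2.1.2.1 p hP q hpq
  · intro hsub
    by_contra hpq
    obtain ⟨r₀, hr₀p, hr₀q⟩ : ∃ t, r t p ∧ ¬ r t q := by
      by_contra h
      push_neg at h
      exact hpq ((hap p q).mpr h)
    -- build an interpolation chain below p, above r₀
    let T := {x : S // r r₀ x}
    let step : T → T := fun t => ⟨Classical.choose (hi r₀ t.1 t.2),
      (Classical.choose_spec (hi r₀ t.1 t.2)).1⟩
    let m : ℕ → T := fun n => step^[n] ⟨p, hr₀p⟩
    have hm : ∀ n, r (m (n + 1)).1 (m n).1 := by
      intro n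
      have hh : m (n + 1) = step (m n) := Function.iterate_succ_apply' step n _
      rw [hh]
      exact (Classical.choose_spec (hi r₀ (m n).1 (m n).2)).2
    have hm0 : (m 0).1 = p := rfl
    have hanti : ∀ i j, i ≤ j → (m j).1 ≤ (m i).1 := by
      intro i j hij
      induction j with
      | zero => simp_all
      | succ n ih =>
        rcases Nat.lt_or_ge i (n + 1) with h | h
        · exact le_trans (ha.2 _ _ (hm n)) (ih (Nat.lt_succ_iff.mp h))
        · have : i = n + 1 := le_antisymm hij h
          subst this; exact le_rfl
    set F₀ : Set S := {x | ∃ n, (m n).1 ≤ x} with hF₀def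
    set C : Set (Set S) := {F | IsFilt F ∧ IsRound r F ∧ p ∈ F ∧ ∀ x ∈ F, ¬ r x q} with hCdef
    have hF₀ : F₀ ∈ C := by
      refine ⟨⟨⟨p, 0, le_of_eq hm0⟩, ?_, ?_⟩, ?_, ⟨0, le_of_eq hm0⟩, ?_⟩
      · rintro x ⟨n, hn⟩ y hxy
        exact ⟨n, le_trans hn hxy⟩
      · rintro x ⟨n, hn⟩ y ⟨k, hk⟩
        refine ⟨(m (max n k)).1, ⟨max n k, le_rfl⟩, ?_, ?_⟩
        · exact le_trans (hanti n _ (Nat.le_max_left n k)) hn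
        · exact le_trans (hanti k _ (Nat.le_max_right n k)) hk
      · rintro x ⟨n, hn⟩
        exact ⟨(m (n + 1)).1, ⟨n + 1, le_rfl⟩, ha.1 _ _ _ _ le_rfl (hm n) hn⟩
      · rintro x ⟨n, hn⟩ hxq
        exact hr₀q (ha.1 _ _ _ _ (ha.2 _ _ (m n).2) (ha.1 _ _ _ _ hn hxq le_rfl) le_rfl)
    have hzorn : ∀ c ⊆ C, IsChain (· ⊆ ·) c → c.Nonempty → ∃ ub ∈ C, ∀ s ∈ c, s ⊆ ub := by
      intro c hcC hchain hcne
      refine ⟨⋃₀ c, ⟨⟨?_, ?_, ?_⟩, ?_, ?_, ?_⟩, fun s hs => Set.subset_sUnion_of_mem hs⟩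
      · obtain ⟨F, hF⟩ := hcne
        exact ⟨p, F, hF, (hcC hF).2.2.1⟩
      · rintro x ⟨F, hF, hxF⟩ y hxy
        exact ⟨F, hF, (hcC hF).1.2.1 x hxF y hxy⟩
      · rintro x ⟨F, hF, hxF⟩ y ⟨G, hG, hyG⟩
        rcases eq_or_ne F G with rfl | hne
        · obtain ⟨t, htF, h1, h2⟩ := (hcC hF).1.2.2 x hxF y hyG
          exact ⟨t, ⟨F, hF, htF⟩, h1, h2⟩
        · rcases hchain hF hG hne with h | h
          · obtain ⟨t, htG, h1, h2⟩ := (hcC hG).1.2.2 x (h hxF) y hyG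
            exact ⟨t, ⟨G, hG, htG⟩, h1, h2⟩
          · obtain ⟨t, htF, h1, h2⟩ := (hcC hF).1.2.2 x hxF y (h hyG)
            exact ⟨t, ⟨F, hF, htF⟩, h1, h2⟩
      · rintro x ⟨F, hF, hxF⟩
        obtain ⟨t, htF, ht⟩ := (hcC hF).2.1 x hxF
        exact ⟨t, ⟨F, hF, htF⟩, ht⟩
      · obtain ⟨F, hF⟩ := hcne
        exact ⟨F, hF, (hcC hF).2.2.1⟩
      · rintro x ⟨F, hF, hxF⟩
        exact (hcC hF).2.2.2 x hxF
    obtain ⟨M, -, hMmax⟩ := zorn_subset_nonempty C hzorn F₀ hF₀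
    obtain ⟨hMfilt, hMround, hpM, hMdisj⟩ := hMmax.prop
    -- key step: for any a, if N_a = {x | a ⊔ x ∈ M} is disjoint from q^≻ then N_a ⊆ M
    have hNa : ∀ a : S, (∀ x, a ⊔ x ∈ M → ¬ r x q) → ∀ x, a ⊔ x ∈ M → x ∈ M := by
      intro a hdisj x hx
      have hN := extend_filt hd ha hMfilt hMround a
      have hmem : {x | a ⊔ x ∈ M} ∈ C :=
        ⟨hN.1, hN.2, hMfilt.2.1 p hpM _ le_sup_right, hdisj⟩
      exact hMmax.2 hmem (fun z hz => hMfilt.2.1 z hz _ le_sup_right) hx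
    -- primeness
    have hprime : IsPrimeFilt M := by
      intro a b hab
      by_contra hcon
      push_neg at hcon
      obtain ⟨haM, hbM⟩ := hcon
      -- N_a must hit q^≻
      have h1 : ¬ ∀ x, a ⊔ x ∈ M → ¬ r x q := by
        intro hdisj
        exact hbM (hNa a hdisj b hab)
      push_neg at h1
      obtain ⟨x, hxM, hxq⟩ := h1
      -- N_x must hit q^≻
      have h2 : ¬ ∀ u, x ⊔ u ∈ M → ¬ r u q := by
        intro hdisj
        exact haM (hNa x hdisj a (by rwa [sup_comm]))
      push_neg at h2
      obtain ⟨u, huM, huq⟩ := h2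
      -- x ⊔ u ∈ M but x ⊔ u ≤ q, contradicting roundness + disjointness
      have hxu : x ⊔ u ≤ q := sup_le (ha.2 _ _ hxq) (ha.2 _ _ huq)
      obtain ⟨t, htM, ht⟩ := hMround _ huM
      exact hMdisj t htM (ha.1 _ _ _ _ le_rfl ht hxu)
    have hbot : ⊥ ∉ M := by
      intro hbM
      obtain ⟨t, htM, ht⟩ := hMround _ hbM
      exact hMdisj t htM (ha.1 _ _ _ _ le_rfl ht bot_le)
    have hqM : q ∉ M := by
      intro hqM
      obtain ⟨t, htM, ht⟩ := hMround _ hqM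
      exact hMdisj t htM ht
    exact hqM (hsub (show (⟨M, hMfilt, hMround, hprime, hbot⟩ : Spec r) ∈ basicOpen r p from hpM))
end

section
/- Morphisms between ≺-distributive ∨-predomains compose: if ⊏ ⊆ S × S' and ⊏' ⊆ S' × S'' are morphisms (faithful, auxiliary, with pushforward and ∨-pullback), then the relational composition ⊏ ∘ ⊏' ⊆ S × S'' defined by p (⊏∘⊏') p'' iff ∃ p', p ⊏ p' ⊏' p'', is also a morphism. Moreover ≤ is an identity morphism on each S, so ≺-distributive ∨-predomains with these morphisms form a category. -/
variable {S : Type*} [SemilatticeSup S] [OrderBot S]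

/-- A morphism between predomains: Faithful, Auxiliary, Pushforward, ∨-Pullback. -/
def IsMor {S S' : Type*} [SemilatticeSup S] [OrderBot S] [SemilatticeSup S'] [OrderBot S']
    (rS : S → S → Prop) (rS' : S' → S' → Prop) (Q : S → S' → Prop) : Prop :=
  (∀ p, Q p ⊥ → p = ⊥) ∧
  (∀ p q q' p', p ≤ q → Q q q' → q' ≤ p' → Q p p') ∧
  (∀ p q r' s', rS p q → Q q r' → Q q s' → ∃ t', Q p t' ∧ rS' t' r' ∧ rS' t' s') ∧
  (∀ p q r' s', rS p q → Q q (r' ⊔ s') → ∃ u v, Q u r' ∧ Q v s' ∧ rS p (u ⊔ v))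

theorem stmt16 {S' S'' : Type*} [SemilatticeSup S'] [OrderBot S']
    [SemilatticeSup S''] [OrderBot S'']
    (rS : S → S → Prop) (rS' : S' → S' → Prop) (rS'' : S'' → S'' → Prop)
    (hS : IsDistrib rS ∧ IsPredom rS) (hS' : IsDistrib rS' ∧ IsPredom rS')
    (hS'' : IsDistrib rS'' ∧ IsPredom rS'')
    (Q : S → S' → Prop) (Q' : S' → S'' → Prop)
    (hQ : IsMor rS rS' Q) (hQ' : IsMor rS' rS'' Q') :
    IsMor rS rS'' (fun p p'' => ∃ p', Q p p' ∧ Q' p' p'') ∧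
    IsMor rS rS (· ≤ ·) ∧
    (∀ p p', (∃ q, p ≤ q ∧ Q q p') ↔ Q p p') ∧
    (∀ p p', (∃ q', Q p q' ∧ q' ≤ p') ↔ Q p p') := by
  obtain ⟨hQf, hQa, hQp, hQv⟩ := hQ
  obtain ⟨hQ'f, hQ'a, hQ'p, hQ'v⟩ := hQ'
  obtain ⟨hSd, ⟨hSa1, hSa2⟩, hSapp, hSint, hSsup⟩ := hS
  refine ⟨⟨?_, ?_, ?_, ?_⟩, ⟨?_, ?_, ?_, ?_⟩, ?_, ?_⟩
  · rintro p ⟨p', hp', hp''⟩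
    exact hQf p (hQ'f p' hp'' ▸ hp')
  · rintro p q q'' p'' hpq ⟨q', h1, h2⟩ hq''
    exact ⟨q', hQa p q q' q' hpq h1 le_rfl, hQ'a q' q' q'' p'' le_rfl h2 hq''⟩
  · rintro p q r'' s'' hpq ⟨a', hqa, har⟩ ⟨b', hqb, hbs⟩
    obtain ⟨a, hpa, haq⟩ := hSint p q hpq
    obtain ⟨t', hat, hta, htb⟩ := hQp a q a' b' haq hqa hqb
    obtain ⟨hS'a1, hS'a2⟩ := hS'.2.1
    have h1 : Q' t' r'' := hQ'a t' a' r'' r'' (hS'a2 _ _ hta) har le_rfl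
    have h2 : Q' t' s'' := hQ'a t' b' s'' s'' (hS'a2 _ _ htb) hbs le_rfl
    obtain ⟨u', hpu, hut, _⟩ := hQp p a t' t' hpa hat hat
    obtain ⟨w'', huw, hwr, hws⟩ := hQ'p u' t' r'' s'' hut h1 h2
    exact ⟨w'', ⟨u', hpu, huw⟩, hwr, hws⟩
  · rintro p q r'' s'' hpq ⟨q', hqq, hqrs⟩
    obtain ⟨a, hpa, haq⟩ := hSint p q hpq
    obtain ⟨t', hat, htq, _⟩ := hQp a q q' q' haq hqq hqq
    obtain ⟨u', v', hur, hvs, htuv⟩ := hQ'v t' q' r'' s'' htq hqrs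
    obtain ⟨hS'a1, hS'a2⟩ := hS'.2.1
    have haquv : Q a (u' ⊔ v') := hQa a a t' (u' ⊔ v') le_rfl hat (hS'a2 _ _ htuv)
    obtain ⟨u, v, huu, hvv, hpuv⟩ := hQv p a u' v' hpa haquv
    exact ⟨u, v, ⟨u', huu, hur⟩, ⟨v', hvv, hvs⟩, hpuv⟩
  · exact fun p h => le_bot_iff.mp h
  · exact fun p q q' p' h1 h2 h3 => le_trans h1 (le_trans h2 h3)
  · rintro p q r' s' hpq hqr hqs
    obtain ⟨t, hpt, htq⟩ := hSint p q hpq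
    exact ⟨t, hSa2 _ _ hpt, hSa1 t t q r' le_rfl htq hqr, hSa1 t t q s' le_rfl htq hqs⟩
  · rintro p q r' s' hpq hqrs
    obtain ⟨a, hpa, haq⟩ := hSint p q hpq
    obtain ⟨b, hab, hbq⟩ := hSint a q haq
    have hbrs : rS b (r' ⊔ s') := hSa1 b b q (r' ⊔ s') le_rfl hbq hqrs
    obtain ⟨u, v, hur, hvs, hauv, huvb⟩ := hSd b r' s' hbrs a hab
    exact ⟨u, v, hSa2 _ _ hur, hSa2 _ _ hvs,
      hSa1 p p a (u ⊔ v) le_rfl hpa hauv⟩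
  · intro p p'
    constructor
    · rintro ⟨q, h1, h2⟩; exact hQa p q p' p' h1 h2 le_rfl
    · intro h; exact ⟨p, le_rfl, h⟩
  · intro p p'
    constructor
    · rintro ⟨q', h1, h2⟩; exact hQa p p q' p' le_rfl h1 h2
    · intro h; exact ⟨p', h, le_rfl⟩
end

section
/- Let ⊏ ⊆ S × S' be a morphism between ≺-distributive ∨-predomains S and S'. For any proper round prime filter P ∈ Ŝ with P^⊏ = {p' : ∃ p ∈ P, p ⊏ p'} nonempty, P^⊏ is a proper round prime filter of S', i.e. P^⊏ ∈ Ŝ'. -/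
variable {S : Type*} [SemilatticeSup S] [OrderBot S]

theorem stmt17 {S' : Type*} [SemilatticeSup S'] [OrderBot S']
    (rS : S → S → Prop) (rS' : S' → S' → Prop)
    (hS : IsDistrib rS ∧ IsPredom rS) (hS' : IsDistrib rS' ∧ IsPredom rS')
    (Q : S → S' → Prop) (hQ : IsMor rS rS' Q)
    (P : Spec rS) (hne : {p' : S' | ∃ p ∈ P.1, Q p p'}.Nonempty) :
    IsFilt {p' : S' | ∃ p ∈ P.1, Q p p'} ∧
    IsRound rS' {p' : S' | ∃ p ∈ P.1, Q p p'} ∧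
    IsPrimeFilt {p' : S' | ∃ p ∈ P.1, Q p p'} ∧
    ⊥ ∉ {p' : S' | ∃ p ∈ P.1, Q p p'} := by
  obtain ⟨hfaith, haux, hpush, hpull⟩ := hQ
  obtain ⟨⟨hPne, hPup, hPdir⟩, hPround, hPprime, hPbot⟩ := P.2
  have hle' : ∀ a b, rS' a b → a ≤ b := hS'.2.1.2
  refine ⟨⟨hne, ?_, ?_⟩, ?_, ?_, ?_⟩
  · rintro p' ⟨p, hp, hQp⟩ q' hle
    exact ⟨p, hp, haux p p p' q' le_rfl hQp hle⟩
  · rintro r' ⟨p, hp, hQp⟩ s' ⟨q, hq, hQq⟩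
    obtain ⟨t, ht, htp, htq⟩ := hPdir p hp q hq
    obtain ⟨u, hu, hru⟩ := hPround t ht
    obtain ⟨t', hQt', h1, h2⟩ := hpush u t r' s' hru
      (haux t p r' r' htp hQp le_rfl) (haux t q s' s' htq hQq le_rfl)
    exact ⟨t', ⟨u, hu, hQt'⟩, hle' _ _ h1, hle' _ _ h2⟩
  · rintro p' ⟨p, hp, hQp⟩
    obtain ⟨u, hu, hru⟩ := hPround p hp
    obtain ⟨t', hQt', h1, _⟩ := hpush u p p' p' hru hQp hQp
    exact ⟨t', ⟨u, hu, hQt'⟩, h1⟩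
  · rintro r' s' ⟨p, hp, hQp⟩
    obtain ⟨u, hu, hru⟩ := hPround p hp
    obtain ⟨a, b, hQa, hQb, hrab⟩ := hpull u p r' s' hru hQp
    have hab : a ⊔ b ∈ P.1 := hPup u hu _ (hS.2.1.2 _ _ hrab)
    rcases hPprime a b hab with h | h
    · exact Or.inl ⟨a, h, hQa⟩
    · exact Or.inr ⟨b, h, hQb⟩
  · rintro ⟨p, hp, hQp⟩
    exact hPbot (hfaith p hQp ▸ hp)
end

section
/- Let φ be a partial continuous map from X to X' between topological spaces with ∪-bases S and S' respectively, where S', being a ∪-basis, consists of open sets. Define ⊏_φ ⊆ S × S' by p ⊏_φ p' iff p ⋐ φ⁻¹[p'] (there is a compact set C with p ⊆ C ⊆ φ⁻¹[p'], relative to the topology). Then for any continuous φ from X to X' and φ' from X' to X'', ⊏_{φ'∘φ} = ⊏_φ ∘ ⊏_{φ'} (relational composition), provided S' is a ∪-basis (so compact subsets of open φ'⁻¹-preimages lie under basis elements way below them). -/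
variable {S : Type*} [SemilatticeSup S] [OrderBot S]

/-- `p ⊏_φ p'` : there is a compact `C` with `p ⊆ C ⊆ φ⁻¹[p']`. -/
def sqMor {X X' : Type*} [TopologicalSpace X] [TopologicalSpace X']
    (φ : X → X') (p : Set X) (p' : Set X') : Prop :=
  ∃ C : Set X, IsCompact C ∧ p ⊆ C ∧ C ⊆ φ ⁻¹' p'


/-! Core compact sober spaces are locally compact: for `x ∈ V ⋐ U`, interpolation gives a chain
`U = W₀ ⋑ W₁ ⋑ ⋯ ⋑ V`, and by Hofmann–Mislove `⋂ Wₙ` is a compact neighbourhood of `x` in `U`.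
So if `p ⊆ C ⊆ (φ' ∘ φ)⁻¹[p'']` with `C` compact, the compact set `φ[C]` has a compact
neighbourhood `L ⊆ φ'⁻¹[p'']`, and as `S'` is closed under finite unions some `p' ∈ S'` lies
between `φ[C]` and the interior of `L`. -/

open Set

theorem DirectedOn.exists_mem_sUnion_subset {α : Type*} {D F : Set (Set α)}
    (hD : DirectedOn (· ⊆ ·) D) (hne : D.Nonempty) (hF : F.Finite) (hFD : F ⊆ D) :
    ∃ U ∈ D, ⋃₀ F ⊆ U := by
  induction F, hF using Set.Finite.induction_on with
  | empty =>
    obtain ⟨U, hU⟩ := hne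
    exact ⟨U, hU, by simp⟩
  | @insert V F _ _ ih =>
    obtain ⟨U, hUD, hFU⟩ := ih ((subset_insert V F).trans hFD)
    obtain ⟨U', hU'D, hVU', hUU'⟩ := hD V (hFD (mem_insert V F)) U hUD
    exact ⟨U', hU'D, sUnion_insert V F ▸ union_subset hVU' (hFU.trans hUU')⟩

section WayBelow

variable {X : Type*} [TopologicalSpace X] {p p' q q' : Set X}

theorem WayBelow.mono_s18 (hp : p' ⊆ p) (h : WayBelow p q) (hq : q ⊆ q') : WayBelow p' q' :=
  fun C hC hq'C =>
    (h C hC (hq.trans hq'C)).imp fun _ ⟨hFC, hF, hpF⟩ => ⟨hFC, hF, hp.trans hpF⟩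

theorem WayBelow.subset (hq : IsOpen q) (h : WayBelow p q) : p ⊆ q := by
  obtain ⟨F, hF, -, hpF⟩ := h {q} (by simpa using hq) (by simp)
  exact hpF.trans (sUnion_subset_iff.2 fun _ hU => (hF hU).symm ▸ subset_rfl)

theorem WayBelow.union (hp : WayBelow p q) (hp' : WayBelow p' q) : WayBelow (p ∪ p') q := by
  intro C hC hqC
  obtain ⟨F, hFC, hF, hpF⟩ := hp C hC hqC
  obtain ⟨F', hF'C, hF', hp'F'⟩ := hp' C hC hqC
  exact ⟨F ∪ F', union_subset hFC hF'C, hF.union hF',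
    sUnion_union F F' ▸ union_subset_union hpF hp'F'⟩

theorem wayBelow_biUnion {ι : Type*} {s : Set ι} (hs : s.Finite) {p : ι → Set X}
    (h : ∀ i ∈ s, WayBelow (p i) q) : WayBelow (⋃ i ∈ s, p i) q := by
  induction s, hs using Set.Finite.induction_on with
  | empty =>
    rw [biUnion_empty]
    exact fun _ _ _ => ⟨∅, empty_subset _, finite_empty, empty_subset _⟩
  | @insert i s _ _ ih =>
    rw [biUnion_insert]
    exact (h i (mem_insert i s)).union (ih fun j hj => h j (mem_insert_of_mem i hj))

theorem WayBelow.exists_mem_subset_of_directedOn (h : WayBelow p q) {D : Set (Set X)}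
    (hne : D.Nonempty) (hDo : ∀ U ∈ D, IsOpen U) (hD : DirectedOn (· ⊆ ·) D)
    (hqD : q ⊆ ⋃₀ D) : ∃ U ∈ D, p ⊆ U := by
  obtain ⟨F, hFD, hF, hpF⟩ := h D hDo hqD
  obtain ⟨U, hUD, hFU⟩ := hD.exists_mem_sUnion_subset hne hF hFD
  exact ⟨U, hUD, hpF.trans hFU⟩

theorem isCompact_of_forall_isOpen_wayBelow {K : Set X}
    (h : ∀ U, IsOpen U → K ⊆ U → ∃ A, K ⊆ A ∧ WayBelow A U) : IsCompact K := by
  refine isCompact_generateFrom (TopologicalSpace.generateFrom_setOfPred_isOpen _).symm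
    fun P hP hKP => ?_
  obtain ⟨A, hKA, hAP⟩ := h (⋃₀ P) (isOpen_sUnion hP) hKP
  obtain ⟨Q, hQP, hQ, hAQ⟩ := hAP P hP subset_rfl
  exact ⟨Q, hQP, hQ, hKA.trans hAQ⟩

theorem CoreCompact.exists_wayBelow_wayBelow (hcc : CoreCompact X) (hq : IsOpen q)
    (h : WayBelow p q) : ∃ W, IsOpen W ∧ WayBelow p W ∧ WayBelow W q := by
  -- around each `x ∈ q` pick `x ∈ U x ⋐ V x ⋐ q`; finitely many `U x` cover `p`
  have hx : ∀ x ∈ q, ∃ V U : Set X, IsOpen V ∧ IsOpen U ∧ x ∈ U ∧ WayBelow U V ∧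
      WayBelow V q := by
    intro x hxq
    obtain ⟨V, hV, hxV, hVq⟩ := hcc x q hq hxq
    obtain ⟨U, hU, hxU, hUV⟩ := hcc x V hV hxV
    exact ⟨V, U, hV, hU, hxU, hUV, hVq⟩
  choose! V U hV hU hxU hUV hVq using hx
  have hqU : q ⊆ ⋃₀ (U '' q) := fun x hx => ⟨U x, mem_image_of_mem U hx, hxU x hx⟩
  obtain ⟨F, hFU, hF, hpF⟩ := h (U '' q) (forall_mem_image.2 hU) hqU
  obtain ⟨T, hTq, hT, hpT⟩ :=
    (exists_subset_image_finite_and (p := fun t => p ⊆ ⋃₀ t)).1 ⟨F, hFU, hF, hpF⟩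
  rw [sUnion_image] at hpT
  have hUV' : WayBelow (⋃ x ∈ T, U x) (⋃ x ∈ T, V x) :=
    wayBelow_biUnion hT fun x hx => (hUV x (hTq hx)).mono_s18 subset_rfl (subset_biUnion_of_mem hx)
  exact ⟨⋃ x ∈ T, V x, isOpen_biUnion fun x hx => hV x (hTq hx), hUV'.mono_s18 hpT subset_rfl,
    wayBelow_biUnion hT fun x hx => hVq x (hTq hx)⟩

end WayBelow

section HofmannMislove

variable {X : Type*} [TopologicalSpace X]

structure IsScottOpenFilter (F : Set (Set X)) : Prop where
  isOpen : ∀ U ∈ F, IsOpen U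
  univ_mem : univ ∈ F
  mem_of_subset : ∀ U ∈ F, ∀ V, IsOpen V → U ⊆ V → V ∈ F
  inter_mem : ∀ U ∈ F, ∀ V ∈ F, U ∩ V ∈ F
  exists_mem_of_sUnion_mem : ∀ D : Set (Set X), D.Nonempty → (∀ U ∈ D, IsOpen U) →
    DirectedOn (· ⊆ ·) D → ⋃₀ D ∈ F → ∃ U ∈ D, U ∈ F

/-- Hofmann–Mislove. A maximal open `G ∉ F` has irreducible complement, whose generic point lies
in every member of `F` but not in `G`. -/
theorem IsScottOpenFilter.mem_of_sInter_subset [QuasiSober X] {F : Set (Set X)}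
    (hF : IsScottOpenFilter F) {W : Set X} (hW : IsOpen W) (hFW : ⋂₀ F ⊆ W) : W ∈ F := by
  by_contra hWF
  have hchain : ∀ c ⊆ {G | IsOpen G ∧ G ∉ F}, IsChain (· ⊆ ·) c → c.Nonempty →
      ∃ G ∈ {G | IsOpen G ∧ G ∉ F}, ∀ U ∈ c, U ⊆ G := fun c hcS hc hne => by
    have hco : ∀ U ∈ c, IsOpen U := fun U hU => (hcS hU).1
    refine ⟨⋃₀ c, ⟨isOpen_sUnion hco, fun hcF => ?_⟩, fun _ => subset_sUnion_of_mem⟩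
    obtain ⟨U, hUc, hUF⟩ := hF.exists_mem_of_sUnion_mem c hne hco hc.directedOn hcF
    exact (hcS hUc).2 hUF
  obtain ⟨G, hWG, hG⟩ := zorn_subset_nonempty _ hchain W ⟨hW, hWF⟩
  have hGo : IsOpen G := hG.prop.1
  have hGF : G ∉ F := hG.prop.2
  have hup : ∀ Z, IsClosed Z → ¬ Gᶜ ⊆ Z → G ∪ Zᶜ ∈ F := fun Z hZ hGZ => by
    by_contra hZF
    exact hGZ (compl_subset_comm.1
      ((hG.le_of_ge ⟨hGo.union hZ.isOpen_compl, hZF⟩ subset_union_left).trans'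
        subset_union_right))
  have hirr : IsIrreducible Gᶜ := by
    refine ⟨nonempty_compl.2 fun h => hGF (h ▸ hF.univ_mem),
      isPreirreducible_iff_isClosed_union_isClosed.2 fun Z₁ Z₂ hZ₁ hZ₂ hGZ => ?_⟩
    by_contra! h
    refine hGF (hF.mem_of_subset _ (hF.inter_mem _ (hup Z₁ hZ₁ h.1) _ (hup Z₂ hZ₂ h.2)) G hGo ?_)
    rw [← union_inter_distrib_left, ← compl_union]
    exact union_subset subset_rfl (compl_subset_comm.1 hGZ)
  obtain ⟨x, hx⟩ := QuasiSober.sober hirr hGo.isClosed_compl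
  refine hx.mem (hWG (hFW fun U hU => (hx.mem_open_set_iff (hF.isOpen U hU)).2 ?_))
  by_contra h
  exact hGF (hF.mem_of_subset U hU G hGo fun y hyU => by_contra fun hyG => h ⟨y, hyG, hyU⟩)

end HofmannMislove

section LocallyCompact

variable {X : Type*} [TopologicalSpace X]

theorem isScottOpenFilter_of_wayBelow_seq {W : ℕ → Set X} (hWo : ∀ n, IsOpen (W n))
    (hW : ∀ n, WayBelow (W (n + 1)) (W n)) :
    IsScottOpenFilter {U | IsOpen U ∧ ∃ n, W n ⊆ U} := by
  have hanti : Antitone W := antitone_nat_of_succ_le fun n => (hW n).subset (hWo n)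
  refine ⟨fun U hU => hU.1, ⟨isOpen_univ, 0, subset_univ _⟩,
    fun U ⟨_, n, hn⟩ V hV hUV => ⟨hV, n, hn.trans hUV⟩, ?_, ?_⟩
  · rintro U ⟨hU, n, hn⟩ V ⟨hV, m, hm⟩
    exact ⟨hU.inter hV, max n m, subset_inter ((hanti (le_max_left n m)).trans hn)
      ((hanti (le_max_right n m)).trans hm)⟩
  · rintro D hne hDo hD ⟨-, n, hn⟩
    obtain ⟨U, hUD, hU⟩ := (hW n).exists_mem_subset_of_directedOn hne hDo hD hn
    exact ⟨U, hUD, hDo U hUD, n + 1, hU⟩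

theorem isCompact_iInter_of_wayBelow_seq [QuasiSober X] {W : ℕ → Set X}
    (hWo : ∀ n, IsOpen (W n)) (hW : ∀ n, WayBelow (W (n + 1)) (W n)) :
    IsCompact (⋂ n, W n) := by
  refine isCompact_of_forall_isOpen_wayBelow fun U hU hWU => ?_
  have hWF : ⋂₀ {U | IsOpen U ∧ ∃ n, W n ⊆ U} ⊆ ⋂ n, W n :=
    subset_iInter fun n => sInter_subset_of_mem ⟨hWo n, n, subset_rfl⟩
  obtain ⟨-, n, hn⟩ :=
    (isScottOpenFilter_of_wayBelow_seq hWo hW).mem_of_sInter_subset hU (hWF.trans hWU)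
  exact ⟨W (n + 1), iInter_subset W (n + 1), (hW n).mono_s18 subset_rfl hn⟩

theorem CoreCompact.exists_wayBelow_seq (hcc : CoreCompact X) {V U : Set X} (hU : IsOpen U)
    (hVU : WayBelow V U) : ∃ W : ℕ → Set X, W 0 = U ∧
      ∀ n, IsOpen (W n) ∧ WayBelow V (W n) ∧ WayBelow (W (n + 1)) (W n) := by
  choose! next hnext_open hV_next hnext using
    fun O (hO : IsOpen O ∧ WayBelow V O) => hcc.exists_wayBelow_wayBelow hO.1 hO.2
  have hinv : ∀ n, IsOpen (next^[n] U) ∧ WayBelow V (next^[n] U) := fun n => by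
    induction n with
    | zero => exact ⟨hU, hVU⟩
    | succ n ih =>
      rw [Function.iterate_succ_apply']
      exact ⟨hnext_open _ ih, hV_next _ ih⟩
  refine ⟨fun n => next^[n] U, rfl, fun n => ⟨(hinv n).1, (hinv n).2, ?_⟩⟩
  dsimp only
  rw [Function.iterate_succ_apply']
  exact hnext _ (hinv n)

theorem CoreCompact.locallyCompactSpace [QuasiSober X] (hcc : CoreCompact X) :
    LocallyCompactSpace X := by
  refine ⟨fun x N hN => ?_⟩
  obtain ⟨U, hUN, hU, hxU⟩ := mem_nhds_iff.1 hN
  obtain ⟨V, hV, hxV, hVU⟩ := hcc x U hU hxU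
  obtain ⟨W, rfl, hW⟩ := hcc.exists_wayBelow_seq hU hVU
  have hVW : V ⊆ ⋂ n, W n := subset_iInter fun n => (hW n).2.1.subset (hW n).1
  exact ⟨⋂ n, W n, mem_nhds_iff.2 ⟨V, hVW, hV, hxV⟩, (iInter_subset W 0).trans hUN,
    isCompact_iInter_of_wayBelow_seq (fun n => (hW n).1) fun n => (hW n).2.2⟩

end LocallyCompact

theorem IsUnionBasis.exists_mem_subset_of_isCompact {X : Type*} [TopologicalSpace X]
    {B : Set (Set X)} (hB : IsUnionBasis B) {K U : Set X} (hK : IsCompact K) (hU : IsOpen U)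
    (hKU : K ⊆ U) : ∃ b ∈ B, K ⊆ b ∧ b ⊆ U := by
  let ι := {b // b ∈ B ∧ b ⊆ U}
  have : Nonempty ι := ⟨⟨∅, hB.2.1, empty_subset U⟩⟩
  have hcover : K ⊆ ⋃ b : ι, b.1 := fun x hx =>
    let ⟨b, hb, hxb, hbU⟩ := hB.1.exists_subset_of_mem_open (hKU hx) hU
    mem_iUnion.2 ⟨⟨b, hb, hbU⟩, hxb⟩
  have hdir : Directed (· ⊆ ·) fun b : ι => b.1 := fun b c =>
    ⟨⟨b.1 ∪ c.1, hB.2.2 _ b.2.1 _ c.2.1, union_subset b.2.2 c.2.2⟩,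
      subset_union_left, subset_union_right⟩
  obtain ⟨⟨b, hb, hbU⟩, hKb⟩ :=
    hK.elim_directed_cover (fun b : ι => b.1) (fun b => hB.1.isOpen b.2.1) hcover hdir
  exact ⟨b, hb, hKb, hbU⟩

theorem stmt18_general {X X' X'' : Type*} [TopologicalSpace X] [TopologicalSpace X']
    [TopologicalSpace X''] [QuasiSober X']
    (hccX' : CoreCompact X')
    (B : Set (Set X)) (B' : Set (Set X')) (B'' : Set (Set X''))
    (hB' : IsUnionBasis B') (hB'' : IsUnionBasis B'')
    (φ : X → X') (φ' : X' → X'') (hφ : Continuous φ) (hφ' : Continuous φ') :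
    ∀ p ∈ B, ∀ p'' ∈ B'',
      (sqMor (φ' ∘ φ) p p'' ↔ ∃ p' ∈ B', sqMor φ p p' ∧ sqMor φ' p' p'') := by
  intro p _ p'' hp''
  have := hccX'.locallyCompactSpace
  constructor
  · rintro ⟨C, hC, hpC, hCp''⟩
    obtain ⟨L, hL, hCL, hLp''⟩ := exists_compact_between (hC.image hφ)
      ((hB''.1.isOpen hp'').preimage hφ') (image_subset_iff.2 hCp'')
    obtain ⟨p', hp', hCp', hp'L⟩ :=
      hB'.exists_mem_subset_of_isCompact (hC.image hφ) isOpen_interior hCL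
    exact ⟨p', hp', ⟨C, hC, hpC, image_subset_iff.1 hCp'⟩,
      ⟨L, hL, hp'L.trans interior_subset, hLp''⟩⟩
  · rintro ⟨p', -, ⟨C, hC, hpC, hCp'⟩, ⟨C', -, hp'C', hC'p''⟩⟩
    exact ⟨C, hC, hpC, hCp'.trans (preimage_mono (hp'C'.trans hC'p''))⟩

theorem stmt18 {X X' X'' : Type*} [TopologicalSpace X] [TopologicalSpace X']
    [TopologicalSpace X''] [QuasiSober X] [T0Space X] [QuasiSober X'] [T0Space X']
    [QuasiSober X''] [T0Space X'']
    (hccX : CoreCompact X) (hccX' : CoreCompact X') (hccX'' : CoreCompact X'')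
    (B : Set (Set X)) (B' : Set (Set X')) (B'' : Set (Set X''))
    (hB : IsUnionBasis B) (hB' : IsUnionBasis B') (hB'' : IsUnionBasis B'')
    (φ : X → X') (φ' : X' → X'') (hφ : Continuous φ) (hφ' : Continuous φ') :
    ∀ p ∈ B, ∀ p'' ∈ B'',
      (sqMor (φ' ∘ φ) p p'' ↔ ∃ p' ∈ B', sqMor φ p p' ∧ sqMor φ' p' p'') :=
  stmt18_general hccX' B B' B'' hB' hB'' φ φ' hφ hφ'
end
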